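/- Let $a_k, b_k, c_k, d_k \in \mathbb{Z}$ with $|a_k d_k - b_k c_k| = 1$, and suppose $-d_k - c_k \equiv a_k + b_k \pmod{3}$ (i.e. $D_k \in \Gamma_1$). Then for the digit set $D_k = \{(0,0)^t, (a_k,b_k)^t, (c_k,d_k)^t\}$, the zero set of the mask polynomial satisfies $\mathcal{Z}(m_{D_k}) = \left(\frac{1}{3}(1,1)^t + \mathbb{Z}^2\right) \cup \left(\frac{2}{3}(1,1)^t + \mathbb{Z}^2\right)$. -/

import Mathlib

/-!
With `e x = exp (2πix)` and `(x, y) = (⟪ξ, (a, b)⟫, ⟪ξ, (c, d)⟫)` we have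
`m_D ξ = (1 + e x + e y) / 3`. As `e x`, `e y` lie on the unit circle, `1 + e x + e y = 0` exactly
when `e x` is a primitive cube root of unity and `e y = (e x)⁻¹`, i.e. when `3x = m`, `3y = n` are
integers with `m ≢ 0` and `m + n ≡ 0 (mod 3)`. Since the matrix `[[a, b], [c, d]]` is unimodular,
`3x, 3y ∈ ℤ` iff `3ξ ∈ ℤ²`; since its entries sum to `0` mod 3, it carries the diagonal of
`(ℤ/3)²` onto the antidiagonal. Hence the zeros are the `ξ` with `3ξ ≡ (1, 1)` or `(2, 2) (mod 3)`.
-/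

/-- The mask polynomial of a finite digit set `D ⊂ ℤ²`. -/
noncomputable def maskPoly (D : Finset (ℤ × ℤ)) (ξ : ℝ × ℝ) : ℂ :=
  (D.card : ℂ)⁻¹ * ∑ w ∈ D, Complex.exp (2 * (Real.pi : ℂ) * Complex.I *
    ((ξ.1 * w.1 + ξ.2 * w.2 : ℝ) : ℂ))

open Complex ComplexConjugate

lemma one_add_add_eq_zero_iff {u v : ℂ} (hu : ‖u‖ = 1) (hv : ‖v‖ = 1) :
    1 + u + v = 0 ↔ u ^ 2 + u + 1 = 0 ∧ u * v = 1 := by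
  have hu' : u * conj u = 1 := by rw [mul_conj, normSq_eq_norm_sq, hu]; norm_num
  have hv' : v * conj v = 1 := by rw [mul_conj, normSq_eq_norm_sq, hv]; norm_num
  constructor
  · intro h
    -- conjugating and multiplying by `u * v` gives `u * v + v + u = 0`
    have hconj : 1 + conj u + conj v = 0 := by simpa using congrArg conj h
    have huv : u * v = 1 := by
      linear_combination u * v * hconj - v * hu' - u * hv' - h
    exact ⟨by linear_combination u * h - huv, huv⟩
  · rintro ⟨hq, huv⟩
    linear_combination v * hq - (u + 1) * huv

lemma sq_add_self_add_one_eq_zero_iff {K : Type*} [Field K] [CharZero K] {u : K} :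
    u ^ 2 + u + 1 = 0 ↔ u ^ 3 = 1 ∧ u ≠ 1 := by
  constructor
  · intro h
    refine ⟨by linear_combination (u - 1) * h, fun h1 => ?_⟩
    rw [h1] at h
    norm_num at h
  · rintro ⟨h3, h1⟩
    have h : (u - 1) * (u ^ 2 + u + 1) = 0 := by linear_combination h3
    exact (mul_eq_zero.mp h).resolve_left (sub_ne_zero.mpr h1)

noncomputable def expTwoPiI (x : ℝ) : ℂ := exp (2 * Real.pi * I * x)

lemma expTwoPiI_add (x y : ℝ) : expTwoPiI (x + y) = expTwoPiI x * expTwoPiI y := by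
  simp only [expTwoPiI, ← exp_add]; push_cast; ring_nf

lemma expTwoPiI_three_mul (x : ℝ) : expTwoPiI (3 * x) = expTwoPiI x ^ 3 := by
  rw [show 3 * x = x + x + x by ring, expTwoPiI_add, expTwoPiI_add]; ring

lemma norm_expTwoPiI (x : ℝ) : ‖expTwoPiI x‖ = 1 := by
  rw [expTwoPiI, show 2 * Real.pi * I * x = ((2 * Real.pi * x : ℝ) : ℂ) * I by push_cast; ring]
  exact norm_exp_ofReal_mul_I _

lemma expTwoPiI_eq_one_iff (x : ℝ) : expTwoPiI x = 1 ↔ ∃ k : ℤ, x = k := by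
  have h2πI : 2 * Real.pi * I ≠ 0 := by simp [Real.pi_ne_zero]
  rw [expTwoPiI, exp_eq_one_iff]
  refine exists_congr fun k => ?_
  rw [mul_comm _ (x : ℂ), mul_left_inj' h2πI]
  exact_mod_cast Iff.rfl

lemma one_add_expTwoPiI_add_expTwoPiI_eq_zero_iff (x y : ℝ) :
    1 + expTwoPiI x + expTwoPiI y = 0 ↔
      ∃ m n : ℤ, 3 * x = m ∧ 3 * y = n ∧ (m : ZMod 3) ≠ 0 ∧ (m : ZMod 3) + n = 0 := by
  rw [one_add_add_eq_zero_iff (norm_expTwoPiI x) (norm_expTwoPiI y),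
    sq_add_self_add_one_eq_zero_iff, ← expTwoPiI_three_mul, ← expTwoPiI_add,
    expTwoPiI_eq_one_iff, expTwoPiI_eq_one_iff]
  simp only [Ne, expTwoPiI_eq_one_iff, ← Int.cast_add, ZMod.intCast_zmod_eq_zero_iff_dvd,
    Nat.cast_ofNat]
  constructor
  · rintro ⟨⟨⟨m, hm⟩, hx⟩, k, hk⟩
    refine ⟨m, 3 * k - m, hm, by push_cast; linarith, ?_, ⟨k, by ring⟩⟩
    rintro ⟨j, rfl⟩
    exact hx ⟨j, by push_cast at hm; linarith⟩
  · rintro ⟨m, n, hm, hn, hm3, k, hk⟩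
    refine ⟨⟨⟨m, hm⟩, ?_⟩, k, ?_⟩
    · rintro ⟨j, rfl⟩
      exact hm3 ⟨j, by exact_mod_cast hm.symm⟩
    · have hk' : (m + n : ℝ) = 3 * k := by exact_mod_cast hk
      linarith

lemma exists_intCast_linear_iff_of_isUnit_det {a b c d : ℤ} (hdet : IsUnit (a * d - b * c))
    (p q : ℝ) (P : ℤ → ℤ → Prop) :
    (∃ m n : ℤ, p * a + q * b = m ∧ p * c + q * d = n ∧ P m n) ↔
      ∃ s t : ℤ, p = s ∧ q = t ∧ P (a * s + b * t) (c * s + d * t) := by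
  constructor
  · rintro ⟨m, n, hm, hn, hP⟩
    have hδ := Int.isUnit_mul_self hdet
    have hδ' : ((a * d - b * c : ℤ) : ℝ) * (a * d - b * c : ℤ) = 1 := by exact_mod_cast hδ
    push_cast at hδ'
    refine ⟨(a * d - b * c) * (d * m - b * n), (a * d - b * c) * (a * n - c * m), ?_, ?_, ?_⟩
    · push_cast
      linear_combination
        (-p) * hδ' + ((a * d - b * c) * d : ℝ) * hm - ((a * d - b * c) * b : ℝ) * hn
    · push_cast
      linear_combination
        (-q) * hδ' + ((a * d - b * c) * a : ℝ) * hn - ((a * d - b * c) * c : ℝ) * hm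
    convert hP using 1
    · linear_combination m * hδ
    · linear_combination n * hδ
  · rintro ⟨s, t, rfl, rfl, hP⟩
    exact ⟨_, _, by push_cast; ring, by push_cast; ring, hP⟩

/-- A matrix whose entries sum to `0` maps the diagonal `s = t` onto the antidiagonal. -/
lemma ne_zero_and_add_eq_zero_iff {K : Type*} [Field K] {a b c d : K}
    (hsum : a + b + c + d = 0) (hdet : a * d - b * c ≠ 0) (s t : K) :
    (a * s + b * t ≠ 0 ∧ a * s + b * t + (c * s + d * t) = 0) ↔ (s ≠ 0 ∧ s = t) := by
  have hab : a + b ≠ 0 := fun h => hdet (by linear_combination a * hsum - (a + c) * h)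
  have hac : a + c ≠ 0 := fun h => hdet (by linear_combination a * hsum - (a + b) * h)
  rw [show a * s + b * t + (c * s + d * t) = (a + c) * (s - t) by linear_combination t * hsum,
    mul_eq_zero, or_iff_right hac, sub_eq_zero]
  constructor
  · rintro ⟨h, rfl⟩
    exact ⟨fun hs => h (by simp [hs]), rfl⟩
  · rintro ⟨hs, rfl⟩
    exact ⟨by rw [← add_mul]; exact mul_ne_zero hab hs, rfl⟩

lemma eq_emod_three_div_three_add (p : ℝ) {s : ℤ} (hp : 3 * p = s) :
    p = ((s % 3 : ℤ) : ℝ) / 3 + ((s / 3 : ℤ) : ℝ) := by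
  have hs : ((s % 3 + 3 * (s / 3) : ℤ) : ℝ) = s := by rw [Int.emod_add_mul_ediv]
  push_cast at hs
  linarith

lemma mem_oneThird_union_twoThirds_iff (p q : ℝ) :
    (p, q) ∈ {ξ : ℝ × ℝ | ∃ z : ℤ × ℤ, ξ = (1/3 + (z.1:ℝ), 1/3 + (z.2:ℝ))} ∪
        {ξ : ℝ × ℝ | ∃ z : ℤ × ℤ, ξ = (2/3 + (z.1:ℝ), 2/3 + (z.2:ℝ))} ↔
      ∃ s t : ℤ, 3 * p = s ∧ 3 * q = t ∧ (s : ZMod 3) ≠ 0 ∧ (s : ZMod 3) = t := by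
  simp only [Set.mem_union, Set.mem_ofPred_eq, Prod.ext_iff, Ne,
    ZMod.intCast_zmod_eq_zero_iff_dvd, ZMod.intCast_eq_intCast_iff_dvd_sub, Nat.cast_ofNat]
  constructor
  · rintro (⟨z, rfl, rfl⟩ | ⟨z, rfl, rfl⟩)
    · exact ⟨1 + 3 * z.1, 1 + 3 * z.2, by push_cast; ring, by push_cast; ring, by omega,
        by omega⟩
    · exact ⟨2 + 3 * z.1, 2 + 3 * z.2, by push_cast; ring, by push_cast; ring, by omega,
        by omega⟩
  · rintro ⟨s, t, hp, hq, hs, hst⟩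
    rw [eq_emod_three_div_three_add p hp, eq_emod_three_div_three_add q hq,
      show t % 3 = s % 3 by omega]
    rcases (by omega : s % 3 = 1 ∨ s % 3 = 2) with hr | hr <;> rw [hr] <;> push_cast
    · exact .inl ⟨(s / 3, t / 3), rfl, rfl⟩
    · exact .inr ⟨(s / 3, t / 3), rfl, rfl⟩

lemma maskPoly_three_digits {a b c d : ℤ} (hdet : a * d - b * c ≠ 0) (ξ : ℝ × ℝ) :
    maskPoly {(0, 0), (a, b), (c, d)} ξ =
      3⁻¹ * (1 + expTwoPiI (ξ.1 * a + ξ.2 * b) + expTwoPiI (ξ.1 * c + ξ.2 * d)) := by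
  have h0 : ((0, 0) : ℤ × ℤ) ∉ ({(a, b), (c, d)} : Finset (ℤ × ℤ)) := by
    simp only [Finset.mem_insert, Finset.mem_singleton, Prod.ext_iff]
    rintro (⟨rfl, rfl⟩ | ⟨rfl, rfl⟩) <;> simp at hdet
  have h1 : ((a, b) : ℤ × ℤ) ∉ ({(c, d)} : Finset (ℤ × ℤ)) := by
    rw [Finset.mem_singleton, Prod.ext_iff]
    rintro ⟨rfl, rfl⟩
    simp [mul_comm] at hdet
  rw [maskPoly, Finset.sum_insert h0, Finset.sum_insert h1, Finset.sum_singleton,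
    Finset.card_insert_of_notMem h0, Finset.card_insert_of_notMem h1, Finset.card_singleton]
  simp [expTwoPiI]
  ring

/-- For a digit set `D = {(0,0),(a,b),(c,d)} ∈ Γ₁` with `|ad - bc| = 1`, the zero set of the
mask polynomial is `(1/3)(1,1)ᵗ + ℤ² ∪ (2/3)(1,1)ᵗ + ℤ²`. -/
theorem stmt4 (a b c d : ℤ) (hdet : |a * d - b * c| = 1)
    (hΓ : (-d - c) ≡ (a + b) [ZMOD 3]) :
    {ξ : ℝ × ℝ | maskPoly ({(0,0), (a,b), (c,d)} : Finset (ℤ × ℤ)) ξ = 0} =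
      {ξ : ℝ × ℝ | ∃ z : ℤ × ℤ, ξ = (1/3 + (z.1:ℝ), 1/3 + (z.2:ℝ))} ∪
      {ξ : ℝ × ℝ | ∃ z : ℤ × ℤ, ξ = (2/3 + (z.1:ℝ), 2/3 + (z.2:ℝ))} := by
  have hunit : IsUnit (a * d - b * c) := Int.isUnit_iff_abs_eq.mpr hdet
  have hsum : (a : ZMod 3) + b + c + d = 0 := by
    have := (ZMod.intCast_eq_intCast_iff _ _ 3).mpr hΓ
    push_cast at this
    linear_combination -this
  have hdet3 : (a : ZMod 3) * d - b * c ≠ 0 := by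
    simpa using (hunit.map (Int.castRingHom (ZMod 3))).ne_zero
  ext ⟨p, q⟩
  rw [mem_oneThird_union_twoThirds_iff, Set.mem_ofPred_eq, maskPoly_three_digits hunit.ne_zero,
    mul_eq_zero, or_iff_right (by norm_num), one_add_expTwoPiI_add_expTwoPiI_eq_zero_iff]
  simp only [mul_add, ← mul_assoc]
  rw [exists_intCast_linear_iff_of_isUnit_det hunit]
  simp only [Int.cast_add, Int.cast_mul, ne_zero_and_add_eq_zero_iff hsum hdet3]
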